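/- For the function ρ(t₁,t₂) = ((1-12t₁t₂)^{3/2} + 18t₁t₂ - 1)/(108 t₂²) with ρ₁₁ = (1-12t₁t₂)^{-1/2}, the quantity S := ∂/∂t₁ (ρ₁₂/ρ₁₁) equals (1 - √(1-12t₁t₂)) / (t₂ √(1-12t₁t₂)), and S is nonzero at every point of the domain {t₂ ≠ 0, 0 < 12t₁t₂ < 1} ∪ {t₂ ≠ 0, t₁ ≠ 0, 12t₁t₂ < 0}. -/

import Mathlib

noncomputable section

/-- Partial derivative in the first variable. -/
def pd1 (f : ℝ → ℝ → ℝ) : ℝ → ℝ → ℝ := fun t1 t2 => deriv (fun s => f s t2) t1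

/-- Partial derivative in the second variable. -/
def pd2 (f : ℝ → ℝ → ℝ) : ℝ → ℝ → ℝ := fun t1 t2 => deriv (fun s => f t1 s) t2

/-- The explicit solution `ρ` of the homogeneous Monge–Ampère equation. -/
def rho : ℝ → ℝ → ℝ := fun t1 t2 =>
  ((1 - 12 * t1 * t2) ^ ((3 : ℝ) / 2) + 18 * t1 * t2 - 1) / (108 * t2 ^ 2)

/-- `S = ∂₁(ρ₁₂/ρ₁₁)`. -/
def Sfun : ℝ → ℝ → ℝ :=
  pd1 (fun t1 t2 => pd2 (pd1 rho) t1 t2 / pd1 (pd1 rho) t1 t2)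

/-!
Write `r = √(1 - 12 t₁ t₂)`. On the region `r > 0`, `t₂ ≠ 0` one computes in turn
`ρ₁ = (1 - r) / (6 t₂)`, `ρ₁₁ = 1 / r` and `ρ₁₂ = (1 - 6 t₁ t₂ - r) / (6 t₂² r)`, so that
`ρ₁₂ / ρ₁₁ = (1 - 6 t₁ t₂ - r) / (6 t₂²)`, whose `t₁`-derivative is `(1 - r) / (t₂ r)`.
Since these formulas hold on an open set, they may be differentiated again. Finally
`1 - r = 0` forces `t₁ t₂ = 0`.
-/

lemma pd1_congr {f g : ℝ → ℝ → ℝ} {t1 t2 : ℝ}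
    (h : (fun s => f s t2) =ᶠ[nhds t1] fun s => g s t2) : pd1 f t1 t2 = pd1 g t1 t2 :=
  h.deriv_eq

lemma pd2_congr {f g : ℝ → ℝ → ℝ} {t1 t2 : ℝ}
    (h : (fun s => f t1 s) =ᶠ[nhds t2] fun s => g t1 s) : pd2 f t1 t2 = pd2 g t1 t2 :=
  h.deriv_eq

lemma one_sub_sqrt_one_sub_ne_zero {x : ℝ} (hx : x ≠ 0) : 1 - Real.sqrt (1 - x) ≠ 0 := by
  rw [sub_ne_zero, ne_comm, Ne, Real.sqrt_eq_one]
  intro h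
  exact hx (by linarith)

section

variable {t1 t2 : ℝ}

lemma eventually_one_sub_mul_pos_fst (h : 0 < 1 - 12 * t1 * t2) :
    ∀ᶠ s in nhds t1, 0 < 1 - 12 * s * t2 :=
  (continuous_const.sub ((continuous_const.mul continuous_id).mul continuous_const)).continuousAt
    |>.eventually (lt_mem_nhds h)

lemma eventually_one_sub_mul_pos_snd (h : 0 < 1 - 12 * t1 * t2) :
    ∀ᶠ s in nhds t2, 0 < 1 - 12 * t1 * s :=
  (continuous_const.sub (continuous_const.mul continuous_id)).continuousAt.eventually
    (lt_mem_nhds h)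

lemma hasDerivAt_one_sub_mul_fst :
    HasDerivAt (fun s => 1 - 12 * s * t2) (-(12 * 1 * t2)) t1 :=
  (((hasDerivAt_id' t1).const_mul 12).mul_const t2).const_sub 1

lemma hasDerivAt_sqrt_fst (h : 0 < 1 - 12 * t1 * t2) :
    HasDerivAt (fun s => Real.sqrt (1 - 12 * s * t2))
      (-(6 * t2) / Real.sqrt (1 - 12 * t1 * t2)) t1 := by
  convert hasDerivAt_one_sub_mul_fst.sqrt h.ne' using 1
  field_simp
  ring

lemma hasDerivAt_sqrt_snd (h : 0 < 1 - 12 * t1 * t2) :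
    HasDerivAt (fun s => Real.sqrt (1 - 12 * t1 * s))
      (-(6 * t1) / Real.sqrt (1 - 12 * t1 * t2)) t2 := by
  convert (((hasDerivAt_id' t2).const_mul (12 * t1)).const_sub 1).sqrt h.ne' using 1
  field_simp
  ring

lemma pd1_rho (ht2 : t2 ≠ 0) (h : 0 < 1 - 12 * t1 * t2) :
    pd1 rho t1 t2 = (1 - Real.sqrt (1 - 12 * t1 * t2)) / (6 * t2) := by
  have hrho : HasDerivAt (fun s => rho s t2) _ t1 :=
    ((((hasDerivAt_one_sub_mul_fst (t1 := t1) (t2 := t2)).rpow_const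
    (p := 3 / 2) (Or.inl h.ne')).add
    (((hasDerivAt_id' t1).const_mul 18).mul_const t2)).sub_const 1).div_const (108 * t2 ^ 2)
  have hexp : (3 : ℝ) / 2 - 1 = 1 / 2 := by norm_num
  rw [pd1, hrho.deriv, hexp, ← Real.sqrt_eq_rpow]
  field_simp
  ring

lemma pd1_pd1_rho (ht2 : t2 ≠ 0) (h : 0 < 1 - 12 * t1 * t2) :
    pd1 (pd1 rho) t1 t2 = (Real.sqrt (1 - 12 * t1 * t2))⁻¹ := by
  have hρ₁ : pd1 (pd1 rho) t1 t2 =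
      pd1 (fun s t => (1 - Real.sqrt (1 - 12 * s * t)) / (6 * t)) t1 t2 :=
    pd1_congr ((eventually_one_sub_mul_pos_fst h).mono fun s hs => pd1_rho ht2 hs)
  have hderiv : HasDerivAt (fun s => (1 - Real.sqrt (1 - 12 * s * t2)) / (6 * t2)) _ t1 :=
    ((hasDerivAt_sqrt_fst h).const_sub 1).div_const _
  rw [hρ₁, pd1, hderiv.deriv]
  field_simp

lemma pd2_pd1_rho (ht2 : t2 ≠ 0) (h : 0 < 1 - 12 * t1 * t2) :
    pd2 (pd1 rho) t1 t2 = (1 - 6 * t1 * t2 - Real.sqrt (1 - 12 * t1 * t2)) /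
      (6 * t2 ^ 2 * Real.sqrt (1 - 12 * t1 * t2)) := by
  have hρ₁ : pd2 (pd1 rho) t1 t2 =
      pd2 (fun s t => (1 - Real.sqrt (1 - 12 * s * t)) / (6 * t)) t1 t2 :=
    pd2_congr (((eventually_one_sub_mul_pos_snd h).and (eventually_ne_nhds ht2)).mono
      fun s hs => pd1_rho hs.2 hs.1)
  have hderiv : HasDerivAt (fun s => (1 - Real.sqrt (1 - 12 * t1 * s)) / (6 * s)) _ t2 :=
    ((hasDerivAt_sqrt_snd h).const_sub 1).div
    ((hasDerivAt_id' t2).const_mul 6) (mul_ne_zero (by norm_num) ht2)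
  have hr : Real.sqrt (1 - 12 * t1 * t2) ≠ 0 := (Real.sqrt_pos.2 h).ne'
  have hr2 := Real.mul_self_sqrt h.le
  rw [hρ₁, pd2, hderiv.deriv]
  generalize Real.sqrt (1 - 12 * t1 * t2) = r at hr hr2 ⊢
  field_simp
  linear_combination hr2

lemma pd2_pd1_rho_div_pd1_pd1_rho (ht2 : t2 ≠ 0) (h : 0 < 1 - 12 * t1 * t2) :
    pd2 (pd1 rho) t1 t2 / pd1 (pd1 rho) t1 t2 =
      (1 - 6 * t1 * t2 - Real.sqrt (1 - 12 * t1 * t2)) / (6 * t2 ^ 2) := by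
  have hr : Real.sqrt (1 - 12 * t1 * t2) ≠ 0 := (Real.sqrt_pos.2 h).ne'
  rw [pd2_pd1_rho ht2 h, pd1_pd1_rho ht2 h]
  generalize Real.sqrt (1 - 12 * t1 * t2) = r at hr ⊢
  field_simp

lemma Sfun_eq (ht2 : t2 ≠ 0) (h : 0 < 1 - 12 * t1 * t2) :
    Sfun t1 t2 = (1 - Real.sqrt (1 - 12 * t1 * t2)) / (t2 * Real.sqrt (1 - 12 * t1 * t2)) := by
  have hratio : Sfun t1 t2 =
      pd1 (fun s t => (1 - 6 * s * t - Real.sqrt (1 - 12 * s * t)) / (6 * t ^ 2)) t1 t2 :=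
    pd1_congr ((eventually_one_sub_mul_pos_fst h).mono
      fun s hs => pd2_pd1_rho_div_pd1_pd1_rho ht2 hs)
  have hlin : HasDerivAt (fun s => 1 - 6 * s * t2) (-(6 * 1 * t2)) t1 :=
    (((hasDerivAt_id' t1).const_mul 6).mul_const t2).const_sub 1
  have hderiv : HasDerivAt
      (fun s => (1 - 6 * s * t2 - Real.sqrt (1 - 12 * s * t2)) / (6 * t2 ^ 2)) _ t1 :=
    (hlin.sub (hasDerivAt_sqrt_fst h)).div_const _
  have hr : Real.sqrt (1 - 12 * t1 * t2) ≠ 0 := (Real.sqrt_pos.2 h).ne'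
  rw [hratio, pd1, hderiv.deriv]
  generalize Real.sqrt (1 - 12 * t1 * t2) = r at hr ⊢
  field_simp
  ring

end

theorem stmt14 :
    (∀ t1 t2 : ℝ, t2 ≠ 0 → 12 * t1 * t2 < 1 →
      Sfun t1 t2 = (1 - Real.sqrt (1 - 12 * t1 * t2)) / (t2 * Real.sqrt (1 - 12 * t1 * t2))) ∧
    (∀ t1 t2 : ℝ, t2 ≠ 0 →
      ((0 < 12 * t1 * t2 ∧ 12 * t1 * t2 < 1) ∨ (t1 ≠ 0 ∧ 12 * t1 * t2 < 0)) →
      Sfun t1 t2 ≠ 0) := by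
  refine ⟨fun t1 t2 ht2 h => Sfun_eq ht2 (by linarith), fun t1 t2 ht2 hcase => ?_⟩
  obtain ⟨hne, hlt⟩ : 12 * t1 * t2 ≠ 0 ∧ 12 * t1 * t2 < 1 := by
    rcases hcase with ⟨hpos, hlt⟩ | ⟨-, hneg⟩
    · exact ⟨hpos.ne', hlt⟩
    · exact ⟨hneg.ne, by linarith⟩
  have h : 0 < 1 - 12 * t1 * t2 := by linarith
  rw [Sfun_eq ht2 h]
  exact div_ne_zero (one_sub_sqrt_one_sub_ne_zero hne)
    (mul_ne_zero ht2 (Real.sqrt_pos.2 h).ne')
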